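/- Let F be a field and P(x_1,...,x_N) a nonzero polynomial over F. For each i, let S_i be a finite nonempty subset of F, let d_i be the degree of x_i in P, and choose each x_i independently and uniformly at random from S_i. Then the probability that P(x_1,...,x_N) = 0 is at most the sum over i of d_i/|S_i|. -/

import Mathlib

theorem stmt_0_general (F : Type*) [Field F] [DecidableEq F] (N : ℕ)
    (P : MvPolynomial (Fin N) F) (hP : P ≠ 0)
    (S : Fin N → Finset F) :
    (((Fintype.piFinset S).filter
        (fun x => MvPolynomial.eval x P = 0)).card : ℝ) /
      ((Fintype.piFinset S).card : ℝ) ≤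
    ∑ i, (P.degreeOf i : ℝ) / ((S i).card : ℝ) := by
  have h := NNRat.cast_mono (K := ℝ) (MvPolynomial.schwartz_zippel_sum_degreeOf hP S)
  rw [Fintype.card_piFinset]
  push_cast at h ⊢
  exact h

/-- Non-uniform Schwartz-Zippel: variables chosen uniformly from possibly
different finite sets. -/
theorem stmt_0 (F : Type*) [Field F] [DecidableEq F] (N : ℕ)
    (P : MvPolynomial (Fin N) F) (hP : P ≠ 0)
    (S : Fin N → Finset F) (hS : ∀ i, (S i).Nonempty) :
    (((Fintype.piFinset S).filter
        (fun x => MvPolynomial.eval x P = 0)).card : ℝ) /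
      ((Fintype.piFinset S).card : ℝ) ≤
    ∑ i, (P.degreeOf i : ℝ) / ((S i).card : ℝ) :=
  stmt_0_general F N P hP S
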